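/- arXiv:2403.12260 — 2 statements merged into one kernel-verified Lean document; each statement's English description precedes it below -/
import Mathlib

section
/- Fix a nonempty uncertainty set 𝓕 of value distributions on a finite value set G such that OPT(F) > 0 for every F ∈ 𝓕. Then the set {λ ∈ [0,1] : R_λ*(𝓕) ≤ 0} is nonempty and has a largest element, and the maximin ratio equals this largest element: max_Φ min_{F∈𝓕} Ratio(Φ,F) = max{ λ ∈ [0,1] : R_λ*(𝓕) ≤ 0 }. -/
/-!
Since `OPT(F) > 0` on `𝓕`, `Ratio(Φ, F) ≥ λ` is the same as `λ·OPT(F) − Revenue(Φ, F) ≤ 0`, so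
`min_F Ratio(Φ, F) ≥ λ` exactly when `R_λ^Φ(𝓕) ≤ 0`, and the two optimisation problems have the
same threshold. Neither the maximin ratio nor the minimax regret need be attained a priori, so
both directions are proved up to `ε`. Turning an additive error `ε` on the regret into one on
the ratio, and back, costs a factor `OPT(F)`; this is harmless because `𝓕` is compact and
`OPT` is continuous, so `OPT` is bounded above and away from zero on `𝓕`.
-/

noncomputable section

namespace RobustPricing

/-- A probability weight vector on the grid `{v 0, …, v K}`. -/
def IsDist {K : ℕ} (f : Fin (K + 1) → ℝ) : Prop :=
  (∀ i, 0 ≤ f i) ∧ ∑ i, f i = 1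

/-- Tail probability `F̄(p) = ∑_{v ∈ G, v ≥ p} f(v)`. -/
def tail {K : ℕ} (v f : Fin (K + 1) → ℝ) (p : ℝ) : ℝ :=
  ∑ i, if p ≤ v i then f i else 0

/-- Expected revenue of the price distribution `φ` against the value distribution `f`. -/
def revenue {K : ℕ} (v φ f : Fin (K + 1) → ℝ) : ℝ :=
  ∑ i, φ i * v i * tail v f (v i)

/-- `OPT(F) = max_{p ∈ G} p · F̄(p)`. -/
def opt {K : ℕ} (v f : Fin (K + 1) → ℝ) : ℝ :=
  ⨆ i, v i * tail v f (v i)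

/-- `Regret(Φ, F) = OPT(F) − Revenue(Φ, F)`. -/
def regret {K : ℕ} (v φ f : Fin (K + 1) → ℝ) : ℝ :=
  opt v f - revenue v φ f

/-- `Ratio(Φ, F) = Revenue(Φ, F) / OPT(F)`. -/
def ratio {K : ℕ} (v φ f : Fin (K + 1) → ℝ) : ℝ :=
  revenue v φ f / opt v f

/-- The set of mechanisms (price distributions on the grid). -/
def Mech (K : ℕ) : Set (Fin (K + 1) → ℝ) := {φ | IsDist φ}

/-- Worst-case `λ`-regret `R_λ^Φ(𝓕)` of mechanism `φ` over the uncertainty set `F`. -/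
def wcReg {K : ℕ} (v : Fin (K + 1) → ℝ) (F : Set (Fin (K + 1) → ℝ))
    (φ : Fin (K + 1) → ℝ) (l : ℝ) : ℝ :=
  sSup ((fun f => l * opt v f - revenue v φ f) '' F)

/-- Minimax `λ`-regret `R_λ*(𝓕)`. -/
def minimaxReg {K : ℕ} (v : Fin (K + 1) → ℝ) (F : Set (Fin (K + 1) → ℝ)) (l : ℝ) : ℝ :=
  sInf ((fun φ => wcReg v F φ l) '' Mech K)

/-- Worst-case revenue `min_{F ∈ 𝓕} Revenue(Φ, F)`. -/
def worstRevenue {K : ℕ} (v : Fin (K + 1) → ℝ) (F : Set (Fin (K + 1) → ℝ))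
    (φ : Fin (K + 1) → ℝ) : ℝ :=
  sInf ((fun f => revenue v φ f) '' F)

/-- Worst-case regret `max_{F ∈ 𝓕} Regret(Φ, F)`. -/
def worstRegret {K : ℕ} (v : Fin (K + 1) → ℝ) (F : Set (Fin (K + 1) → ℝ))
    (φ : Fin (K + 1) → ℝ) : ℝ :=
  sSup ((fun f => regret v φ f) '' F)

/-- Worst-case ratio `min_{F ∈ 𝓕} Ratio(Φ, F)`. -/
def worstRatio {K : ℕ} (v : Fin (K + 1) → ℝ) (F : Set (Fin (K + 1) → ℝ))
    (φ : Fin (K + 1) → ℝ) : ℝ :=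
  sInf ((fun f => ratio v φ f) '' F)

/-- Maximin revenue `θ*_Revenue(𝓕) = max_Φ min_{F ∈ 𝓕} Revenue(Φ, F)`. -/
def thetaRevStar {K : ℕ} (v : Fin (K + 1) → ℝ) (F : Set (Fin (K + 1) → ℝ)) : ℝ :=
  sSup ((fun φ => worstRevenue v F φ) '' Mech K)

/-- Minimax regret `θ*_Regret(𝓕) = min_Φ max_{F ∈ 𝓕} Regret(Φ, F)`. -/
def thetaRegStar {K : ℕ} (v : Fin (K + 1) → ℝ) (F : Set (Fin (K + 1) → ℝ)) : ℝ :=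
  sInf ((fun φ => worstRegret v F φ) '' Mech K)

/-- Maximin ratio `θ*_Ratio(𝓕) = max_Φ min_{F ∈ 𝓕} Ratio(Φ, F)`. -/
def thetaRatStar {K : ℕ} (v : Fin (K + 1) → ℝ) (F : Set (Fin (K + 1) → ℝ)) : ℝ :=
  sSup ((fun φ => worstRatio v F φ) '' Mech K)

/-- Relative performance of `Φ` over all three criteria:
`RelPerf(Φ, All, 𝓕) = min_{F ∈ 𝓕} min{Rev/θ*_Rev, θ*_Reg/Reg, Ratio/θ*_Ratio}`. -/
def relPerfAll {K : ℕ} (v : Fin (K + 1) → ℝ) (F : Set (Fin (K + 1) → ℝ))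
    (φ : Fin (K + 1) → ℝ) : ℝ :=
  sInf ((fun f => min (revenue v φ f / thetaRevStar v F)
    (min (thetaRegStar v F / regret v φ f) (ratio v φ f / thetaRatStar v F))) '' F)

/-- Multi-criterion robust approximation factor `c*(𝓕) = max_Φ RelPerf(Φ, All, 𝓕)`. -/
def cstar {K : ℕ} (v : Fin (K + 1) → ℝ) (F : Set (Fin (K + 1) → ℝ)) : ℝ :=
  sSup ((fun φ => relPerfAll v F φ) '' Mech K)

/-- The moment–quantile uncertainty set: distributions on the grid whose `i`-th moments
are `m i` for `i ∈ I` and whose tail probability at `r j` is `q j` for `j ∈ J`. -/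
def MQSet {K : ℕ} (v : Fin (K + 1) → ℝ) (I : Finset ℕ) (m : ℕ → ℝ)
    (J : Finset ℕ) (r q : ℕ → ℝ) : Set (Fin (K + 1) → ℝ) :=
  {f | IsDist f ∧ (∀ i ∈ I, ∑ k, f k * v k ^ i = m i) ∧ (∀ j ∈ J, tail v f (r j) = q j)}

/-- Cumulative term `∑_{s ∈ G, s ≤ v_w} s · φ(s)`. -/
def cum {K : ℕ} (v φ : Fin (K + 1) → ℝ) (w : Fin (K + 1)) : ℝ :=
  ∑ s, if v s ≤ v w then v s * φ s else 0

/-- Feasibility of dual variables `(θ, α, β)` in the dual LP for the worst-case λ-regret: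
(a) `θ ≥ ∑_i α_i(p) m_i + ∑_j β_j(p) q_j` for all prices `p ∈ G`, and
(b) `λ p 1{v ≥ p} − ∑_{s ≤ v} s φ(s) − ∑_i α_i(p) v^i − ∑_j β_j(p) 1{v ≥ r_j} ≤ 0`
for all values `v` and prices `p` in `G`. -/
def dualFeas {K : ℕ} (v : Fin (K + 1) → ℝ) (I : Finset ℕ) (m : ℕ → ℝ)
    (J : Finset ℕ) (r q : ℕ → ℝ) (φ : Fin (K + 1) → ℝ) (l θ : ℝ)
    (α β : ℕ → Fin (K + 1) → ℝ) : Prop :=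
  (∀ p, ∑ i ∈ I, α i p * m i + ∑ j ∈ J, β j p * q j ≤ θ) ∧
  (∀ w p, l * v p * (if v p ≤ v w then 1 else 0) - cum v φ w
      - (∑ i ∈ I, α i p * v w ^ i)
      - (∑ j ∈ J, β j p * (if r j ≤ v w then 1 else 0)) ≤ 0)

open Set

section Basic

variable {K : ℕ} {v : Fin (K + 1) → ℝ}

theorem tail_nonneg {f : Fin (K + 1) → ℝ} (hf : ∀ i, 0 ≤ f i) (p : ℝ) : 0 ≤ tail v f p :=
  Finset.sum_nonneg fun i _ => by split_ifs <;> simp [hf i]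

theorem mul_tail_le_opt (f : Fin (K + 1) → ℝ) (i : Fin (K + 1)) :
    v i * tail v f (v i) ≤ opt v f :=
  le_ciSup (f := fun i => v i * tail v f (v i)) (Set.finite_range _).bddAbove i

theorem revenue_nonneg (hv0 : ∀ i, 0 ≤ v i) {φ f : Fin (K + 1) → ℝ} (hφ : ∀ i, 0 ≤ φ i)
    (hf : ∀ i, 0 ≤ f i) : 0 ≤ revenue v φ f :=
  Finset.sum_nonneg fun i _ => mul_nonneg (mul_nonneg (hφ i) (hv0 i)) (tail_nonneg hf _)

theorem revenue_le_opt {φ : Fin (K + 1) → ℝ} (hφ : IsDist φ) (f : Fin (K + 1) → ℝ) :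
    revenue v φ f ≤ opt v f :=
  calc revenue v φ f = ∑ i, φ i * (v i * tail v f (v i)) := by
        simp only [revenue, mul_assoc]
    _ ≤ ∑ i, φ i * opt v f :=
        Finset.sum_le_sum fun i _ => mul_le_mul_of_nonneg_left (mul_tail_le_opt f i) (hφ.1 i)
    _ = opt v f := by rw [← Finset.sum_mul, hφ.2, one_mul]

theorem continuous_tail (p : ℝ) : Continuous fun f : Fin (K + 1) → ℝ => tail v f p :=
  continuous_finsetSum _ fun i _ => by
    split_ifs
    exacts [continuous_apply i, continuous_const]

theorem continuous_revenue (φ : Fin (K + 1) → ℝ) : Continuous (revenue v φ) :=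
  continuous_finsetSum _ fun _ _ => continuous_const.mul (continuous_tail _)

theorem continuous_opt : Continuous (opt v) := by
  have h : opt v = fun f => Finset.univ.sup' Finset.univ_nonempty
      fun i => v i * tail v f (v i) := by
    funext f
    exact (Finset.sup'_univ_eq_ciSup _).symm
  rw [h]
  exact Continuous.finset_sup'_apply _ fun i _ => continuous_const.mul (continuous_tail _)

theorem isCompact_of_isClosed_of_isDist {F : Set (Fin (K + 1) → ℝ)} (hcl : IsClosed F)
    (hsub : ∀ f ∈ F, IsDist f) : IsCompact F := by
  refine (isCompact_univ_pi fun _ => isCompact_Icc (a := (0 : ℝ)) (b := 1)).of_isClosed_subset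
    hcl fun f hf i _ => ⟨(hsub f hf).1 i, ?_⟩
  rw [← (hsub f hf).2]
  exact Finset.single_le_sum (fun j _ => (hsub f hf).1 j) (Finset.mem_univ i)

theorem mech_nonempty (K : ℕ) : (Mech K).Nonempty :=
  ⟨Pi.single 0 1, fun i => by by_cases h : i = 0 <;> simp [h], by simp⟩

theorem ratio_le_one {φ f : Fin (K + 1) → ℝ} (hφ : IsDist φ) (hf : 0 < opt v f) :
    ratio v φ f ≤ 1 :=
  (div_le_one hf).2 (revenue_le_opt hφ f)

theorem sub_le_ratio_iff {φ f : Fin (K + 1) → ℝ} (hf : 0 < opt v f) (l ε : ℝ) :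
    l - ε ≤ ratio v φ f ↔ l * opt v f - revenue v φ f ≤ ε * opt v f := by
  rw [ratio, le_div_iff₀ hf]
  constructor <;> intro h <;> linarith

end Basic

section UncertaintySet

variable {K : ℕ} {v : Fin (K + 1) → ℝ} {F : Set (Fin (K + 1) → ℝ)}

theorem bddBelow_ratio_image (hv0 : ∀ i, 0 ≤ v i) (hsub : ∀ f ∈ F, IsDist f)
    (hopt : ∀ f ∈ F, 0 < opt v f) {φ : Fin (K + 1) → ℝ} (hφ : IsDist φ) :
    BddBelow ((fun f => ratio v φ f) '' F) :=
  ⟨0, forall_mem_image.2 fun f hf =>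
    div_nonneg (revenue_nonneg hv0 hφ.1 (hsub f hf).1) (hopt f hf).le⟩

theorem le_worstRatio_iff (hne : F.Nonempty) (hv0 : ∀ i, 0 ≤ v i) (hsub : ∀ f ∈ F, IsDist f)
    (hopt : ∀ f ∈ F, 0 < opt v f) {φ : Fin (K + 1) → ℝ} (hφ : IsDist φ) (l : ℝ) :
    l ≤ worstRatio v F φ ↔ ∀ f ∈ F, l ≤ ratio v φ f := by
  rw [worstRatio, le_csInf_iff (bddBelow_ratio_image hv0 hsub hopt hφ) (hne.image _),
    forall_mem_image]

theorem worstRatio_le_one (hne : F.Nonempty) (hv0 : ∀ i, 0 ≤ v i) (hsub : ∀ f ∈ F, IsDist f)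
    (hopt : ∀ f ∈ F, 0 < opt v f) {φ : Fin (K + 1) → ℝ} (hφ : IsDist φ) :
    worstRatio v F φ ≤ 1 :=
  let ⟨f, hf⟩ := hne
  (csInf_le (bddBelow_ratio_image hv0 hsub hopt hφ) (mem_image_of_mem _ hf)).trans
    (ratio_le_one hφ (hopt f hf))

theorem bddAbove_worstRatio_image (hne : F.Nonempty) (hv0 : ∀ i, 0 ≤ v i)
    (hsub : ∀ f ∈ F, IsDist f) (hopt : ∀ f ∈ F, 0 < opt v f) :
    BddAbove ((fun φ => worstRatio v F φ) '' Mech K) :=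
  ⟨1, forall_mem_image.2 fun _ hφ => worstRatio_le_one hne hv0 hsub hopt hφ⟩

theorem worstRatio_le_thetaRatStar (hne : F.Nonempty) (hv0 : ∀ i, 0 ≤ v i)
    (hsub : ∀ f ∈ F, IsDist f) (hopt : ∀ f ∈ F, 0 < opt v f) {φ : Fin (K + 1) → ℝ}
    (hφ : φ ∈ Mech K) : worstRatio v F φ ≤ thetaRatStar v F :=
  le_csSup (bddAbove_worstRatio_image hne hv0 hsub hopt) (mem_image_of_mem _ hφ)

theorem thetaRatStar_mem_Icc (hne : F.Nonempty) (hv0 : ∀ i, 0 ≤ v i)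
    (hsub : ∀ f ∈ F, IsDist f) (hopt : ∀ f ∈ F, 0 < opt v f) :
    thetaRatStar v F ∈ Icc 0 1 := by
  obtain ⟨φ, hφ⟩ := mech_nonempty K
  have hφ0 : 0 ≤ worstRatio v F φ := (le_worstRatio_iff hne hv0 hsub hopt hφ 0).2 fun f hf =>
    div_nonneg (revenue_nonneg hv0 hφ.1 (hsub f hf).1) (hopt f hf).le
  exact ⟨hφ0.trans (worstRatio_le_thetaRatStar hne hv0 hsub hopt hφ),
    Real.sSup_le (forall_mem_image.2 fun _ hφ => worstRatio_le_one hne hv0 hsub hopt hφ)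
      zero_le_one⟩

theorem wcReg_le_iff (hFc : IsCompact F) (hne : F.Nonempty) (φ : Fin (K + 1) → ℝ) (l x : ℝ) :
    wcReg v F φ l ≤ x ↔ ∀ f ∈ F, l * opt v f - revenue v φ f ≤ x := by
  have hcont : Continuous fun f => l * opt v f - revenue v φ f :=
    (continuous_const.mul continuous_opt).sub (continuous_revenue φ)
  have hbdd := hFc.bddAbove_image hcont.continuousOn
  rw [wcReg, csSup_le_iff hbdd (hne.image _), forall_mem_image]

theorem minimaxReg_le_wcReg (hFc : IsCompact F) (hne : F.Nonempty) {φ : Fin (K + 1) → ℝ}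
    (hφ : φ ∈ Mech K) (l : ℝ) : minimaxReg v F l ≤ wcReg v F φ l := by
  obtain ⟨f, hf⟩ := hne
  have hbdd : BddBelow ((fun φ => wcReg v F φ l) '' Mech K) :=
    ⟨l * opt v f - opt v f, forall_mem_image.2 fun ψ hψ => by
      have hle := (wcReg_le_iff (v := v) hFc ⟨f, hf⟩ ψ l _).1 le_rfl f hf
      linarith [revenue_le_opt (v := v) hψ f]⟩
  exact csInf_le hbdd (mem_image_of_mem _ hφ)

theorem exists_pos_forall_le_opt (hFc : IsCompact F) (hne : F.Nonempty)
    (hopt : ∀ f ∈ F, 0 < opt v f) : ∃ c > 0, ∀ f ∈ F, c ≤ opt v f :=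
  let ⟨f₀, hf₀, hmin⟩ := hFc.exists_isMinOn hne continuous_opt.continuousOn
  ⟨opt v f₀, hopt f₀ hf₀, fun _ hf => hmin hf⟩

theorem minimaxReg_thetaRatStar_nonpos (hFc : IsCompact F) (hne : F.Nonempty)
    (hv0 : ∀ i, 0 ≤ v i) (hsub : ∀ f ∈ F, IsDist f) (hopt : ∀ f ∈ F, 0 < opt v f) :
    minimaxReg v F (thetaRatStar v F) ≤ 0 := by
  set θ := thetaRatStar v F
  obtain ⟨C, hC⟩ := hFc.bddAbove_image (continuous_opt (v := v)).continuousOn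
  obtain ⟨f₁, hf₁⟩ := hne
  have hCpos : 0 < C := (hopt f₁ hf₁).trans_le (hC (mem_image_of_mem _ hf₁))
  refine le_of_forall_pos_le_add fun δ hδ => ?_
  obtain ⟨_, ⟨φ, hφ, rfl⟩, hlt⟩ :=
    exists_lt_of_lt_csSup ((mech_nonempty K).image _) (sub_lt_self θ (div_pos hδ hCpos))
  have hwc : wcReg v F φ θ ≤ δ := (wcReg_le_iff hFc ⟨f₁, hf₁⟩ φ θ δ).2 fun f hf =>
    calc θ * opt v f - revenue v φ f ≤ δ / C * opt v f :=
          (sub_le_ratio_iff (hopt f hf) θ _).1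
            ((le_worstRatio_iff ⟨f₁, hf₁⟩ hv0 hsub hopt hφ _).1 hlt.le f hf)
      _ ≤ δ / C * C := by gcongr; exact hC (mem_image_of_mem _ hf)
      _ = δ := div_mul_cancel₀ δ hCpos.ne'
  simpa using (minimaxReg_le_wcReg hFc ⟨f₁, hf₁⟩ hφ θ).trans hwc

theorem le_thetaRatStar_of_minimaxReg_nonpos (hFc : IsCompact F) (hne : F.Nonempty)
    (hv0 : ∀ i, 0 ≤ v i) (hsub : ∀ f ∈ F, IsDist f) (hopt : ∀ f ∈ F, 0 < opt v f) {l : ℝ}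
    (hl : minimaxReg v F l ≤ 0) : l ≤ thetaRatStar v F := by
  obtain ⟨c, hc, hcopt⟩ := exists_pos_forall_le_opt hFc hne hopt
  refine le_of_forall_pos_le_add fun ε hε => ?_
  obtain ⟨_, ⟨φ, hφ, rfl⟩, hlt⟩ :=
    exists_lt_of_csInf_lt ((mech_nonempty K).image _) (hl.trans_lt (mul_pos hε hc))
  have hφε : l - ε ≤ worstRatio v F φ := (le_worstRatio_iff hne hv0 hsub hopt hφ _).2
    fun f hf => (sub_le_ratio_iff (hopt f hf) l ε).2 <|
      ((wcReg_le_iff hFc hne φ l _).1 hlt.le f hf).trans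
        (mul_le_mul_of_nonneg_left (hcopt f hf) hε.le)
  linarith [worstRatio_le_thetaRatStar hne hv0 hsub hopt hφ]

end UncertaintySet

theorem stmt1_general (K : ℕ) (v : Fin (K + 1) → ℝ) (hv0 : ∀ i, 0 ≤ v i)
    (F : Set (Fin (K + 1) → ℝ)) (hne : F.Nonempty) (hsub : ∀ f ∈ F, IsDist f)
    (hcl : IsClosed F) (hopt : ∀ f ∈ F, 0 < opt v f) :
    ∃ lm : ℝ, IsGreatest {l : ℝ | l ∈ Set.Icc (0 : ℝ) 1 ∧ minimaxReg v F l ≤ 0} lm ∧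
      thetaRatStar v F = lm := by
  have hFc := isCompact_of_isClosed_of_isDist hcl hsub
  refine ⟨thetaRatStar v F, ⟨⟨thetaRatStar_mem_Icc hne hv0 hsub hopt,
    minimaxReg_thetaRatStar_nonpos hFc hne hv0 hsub hopt⟩, fun l hl => ?_⟩, rfl⟩
  exact le_thetaRatStar_of_minimaxReg_nonpos hFc hne hv0 hsub hopt hl.2

/-- the set `{λ ∈ [0,1] : R_λ*(𝓕) ≤ 0}` is nonempty with a largest element,
and the maximin ratio equals this largest element. -/
theorem stmt1 (K : ℕ) (v : Fin (K + 1) → ℝ) (hv : StrictMono v) (hv0 : ∀ i, 0 ≤ v i)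
    (F : Set (Fin (K + 1) → ℝ)) (hne : F.Nonempty) (hsub : ∀ f ∈ F, IsDist f)
    (hcl : IsClosed F) (hopt : ∀ f ∈ F, 0 < opt v f) :
    ∃ lm : ℝ, IsGreatest {l : ℝ | l ∈ Set.Icc (0 : ℝ) 1 ∧ minimaxReg v F l ≤ 0} lm ∧
      thetaRatStar v F = lm :=
  stmt1_general K v hv0 F hne hsub hcl hopt

end RobustPricing
end
end

section
/- Fix a moment–quantile uncertainty set 𝓕 on a finite value set G (nonempty), a mechanism Φ with price weights φ, and λ ∈ [0,1]. Then R_λ^Φ(𝓕) equals the infimum of θ over all tuples (θ, α, β), with θ ∈ ℝ, α : I × G → ℝ, β : J × G → ℝ, satisfying: (a) θ ≥ Σ_{i∈I} α_i(p)·m_i + Σ_{j∈J} β_j(p)·q_j for all p ∈ G, and (b) λ·p·1{v ≥ p} − Σ_{s∈G, s ≤ v} s·φ(s) − Σ_{i∈I} α_i(p)·v^i − Σ_{j∈J} β_j(p)·1{v ≥ r_j} ≤ 0 for all v, p ∈ G. Moreover this infimum is attained. -/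
noncomputable section

namespace RobustPricing

section LPAux

open scoped InnerProductSpace

variable {E : Type*} [NormedAddCommGroup E] [InnerProductSpace ℝ E] [FiniteDimensional ℝ E]

lemma cone_caratheodory {ι : Type*} [Fintype ι] [DecidableEq ι] (b : ι → E) (s : Finset ι)
    (lam : ι → ℝ) (hlam : ∀ i, 0 ≤ lam i) (hsupp : ∀ i ∉ s, lam i = 0) :
    ∃ (T : Finset ι), LinearIndependent ℝ (fun i : T => b i) ∧
      ∃ lam' : ι → ℝ, (∀ i, 0 ≤ lam' i) ∧ (∀ i ∉ T, lam' i = 0) ∧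
        ∑ i, lam' i • b i = ∑ i, lam i • b i := by
  induction s using Finset.strongInduction generalizing lam with
  | _ s ih =>
  by_cases hli : LinearIndependent ℝ (fun i : s => b i)
  · exact ⟨s, hli, lam, hlam, hsupp, rfl⟩
  · obtain ⟨g, hg0, i₀, hgi₀⟩ := Fintype.not_linearIndependent_iff.mp hli
    set g' : ι → ℝ := fun i => if h : i ∈ s then g ⟨i, h⟩ else 0 with hg'
    have hg'sum : ∑ i, g' i • b i = 0 := by
      rw [← Finset.sum_subset (Finset.subset_univ s) (by intro i _ hi; simp [hg', hi])]
      rw [← Finset.sum_attach s (fun i => g' i • b i), ← hg0]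
      exact Finset.sum_congr rfl fun x _ => by simp [hg', x.2]
    have hg'supp : ∀ i ∉ s, g' i = 0 := fun i hi => by simp [hg', hi]
    have key : ∀ g'' : ι → ℝ, (∑ i, g'' i • b i = 0) → (∀ i ∉ s, g'' i = 0) →
        (∃ i ∈ s, 0 < g'' i) →
        ∃ (T : Finset ι), LinearIndependent ℝ (fun i : T => b i) ∧
          ∃ lam' : ι → ℝ, (∀ i, 0 ≤ lam' i) ∧ (∀ i ∉ T, lam' i = 0) ∧
            ∑ i, lam' i • b i = ∑ i, lam i • b i := by
      intro g'' hsum hsupp'' ⟨j, hjs, hjpos⟩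
      set M : Finset ι := s.filter (fun i => 0 < g'' i) with hM
      have hMne : M.Nonempty := ⟨j, by simp [hM, hjs, hjpos]⟩
      obtain ⟨i₁, hi₁M, hi₁min⟩ := M.exists_min_image (fun i => lam i / g'' i) hMne
      have hi₁s : i₁ ∈ s := (Finset.mem_filter.mp hi₁M).1
      have hi₁pos : 0 < g'' i₁ := (Finset.mem_filter.mp hi₁M).2
      set t : ℝ := lam i₁ / g'' i₁ with ht
      have ht0 : 0 ≤ t := div_nonneg (hlam i₁) hi₁pos.le
      set lam2 : ι → ℝ := fun i => lam i - t * g'' i with hlam2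
      have hlam2nn : ∀ i, 0 ≤ lam2 i := by
        intro i
        rcases le_or_gt (g'' i) 0 with h | h
        · have : t * g'' i ≤ 0 := mul_nonpos_of_nonneg_of_nonpos ht0 h
          simp only [hlam2]; linarith [hlam i]
        · have his : i ∈ s := by
            by_contra hc; rw [hsupp'' i hc] at h; exact lt_irrefl 0 h
          have hmin := hi₁min i (Finset.mem_filter.mpr ⟨his, h⟩)
          rw [le_div_iff₀ h] at hmin
          simp only [hlam2]; linarith
      have hlam2supp : ∀ i ∉ s.erase i₁, lam2 i = 0 := by
        intro i hi
        by_cases his : i ∈ s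
        · have hii : i = i₁ := by
            by_contra hne
            exact hi (Finset.mem_erase.mpr ⟨hne, his⟩)
          subst hii
          simp only [hlam2, ht, div_mul_cancel₀ _ hi₁pos.ne', sub_self]
        · simp only [hlam2, hsupp i his, hsupp'' i his, mul_zero, sub_zero]
      have hlam2sum : ∑ i, lam2 i • b i = ∑ i, lam i • b i := by
        simp only [hlam2, sub_smul, Finset.sum_sub_distrib, mul_smul]
        rw [← Finset.smul_sum, hsum, smul_zero, sub_zero]
      exact ih (s.erase i₁) (Finset.erase_ssubset hi₁s) lam2 hlam2nn hlam2supp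
        |>.imp fun T ⟨h1, lam', h2, h3, h4⟩ => ⟨h1, lam', h2, h3, h4.trans hlam2sum⟩
    rcases exists_or_forall_not (fun i => i ∈ s ∧ 0 < g' i) with ⟨j, hjs, hjpos⟩ | hneg
    · exact key g' hg'sum hg'supp ⟨j, hjs, hjpos⟩
    · refine key (fun i => -g' i)
        (by rw [show ∑ i, (-g' i) • b i = -∑ i, g' i • b i by simp [neg_smul], hg'sum, neg_zero])
        (fun i hi => by simp [hg'supp i hi]) ?_
      refine ⟨i₀.1, i₀.2, ?_⟩
      have hne : g' i₀.1 ≠ 0 := by simpa [hg', i₀.2] using hgi₀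
      have hle : g' i₀.1 ≤ 0 := by
        have h1 := hneg i₀.1; push_neg at h1; exact h1 i₀.2
      exact neg_pos.mpr (lt_of_le_of_ne hle hne)

lemma cone_fg_closed {ι : Type*} [Fintype ι] [DecidableEq ι] (b : ι → E) :
    IsClosed {x : E | ∃ lam : ι → ℝ, (∀ i, 0 ≤ lam i) ∧ ∑ i, lam i • b i = x} := by
  have hdec : {x : E | ∃ lam : ι → ℝ, (∀ i, 0 ≤ lam i) ∧ ∑ i, lam i • b i = x}
      = ⋃ (T : {T : Finset ι // LinearIndependent ℝ (fun i : T => b i)}),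
        {x : E | ∃ lam : ι → ℝ, (∀ i, 0 ≤ lam i) ∧ (∀ i ∉ T.1, lam i = 0) ∧
          ∑ i, lam i • b i = x} := by
    ext x
    constructor
    · rintro ⟨lam, h1, h2⟩
      obtain ⟨T, hT, lam', h1', h2', h3'⟩ :=
        cone_caratheodory b Finset.univ lam h1 (fun i hi => absurd (Finset.mem_univ i) hi)
      exact Set.mem_iUnion.mpr ⟨⟨T, hT⟩, lam', h1', h2', h3'.trans h2⟩
    · rintro ⟨S, ⟨T, rfl⟩, lam, h1, _, h3⟩
      exact ⟨lam, h1, h3⟩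
  rw [hdec]
  apply isClosed_iUnion_of_finite
  rintro ⟨T, hT⟩
  -- the cone over a linearly independent family is closed
  let L : (T → ℝ) →ₗ[ℝ] E :=
    { toFun := fun μ => ∑ i : T, μ i • b i
      map_add' := fun μ ν => by simp [add_smul, Finset.sum_add_distrib]
      map_smul' := fun c μ => by simp [smul_smul, Finset.smul_sum]
      }
  have hker : LinearMap.ker L = ⊥ := by
    rw [LinearMap.ker_eq_bot']
    intro μ hμ
    have := Fintype.linearIndependent_iff.mp hT μ hμ
    funext i; exact this i
  have hemb : Topology.IsClosedEmbedding L := LinearMap.isClosedEmbedding_of_injective hker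
  have himg : {x : E | ∃ lam : ι → ℝ, (∀ i, 0 ≤ lam i) ∧ (∀ i ∉ T, lam i = 0) ∧
      ∑ i, lam i • b i = x} = L '' {μ : T → ℝ | ∀ i, 0 ≤ μ i} := by
    ext x
    constructor
    · rintro ⟨lam, h1, h2, h3⟩
      refine ⟨fun i => lam i, fun i => h1 i, ?_⟩
      show ∑ i : T, lam i • b i = x
      rw [← h3, ← Finset.sum_subset (Finset.subset_univ T)
        (fun i _ hi => by rw [h2 i hi, zero_smul])]
      exact Finset.sum_attach T (fun i => lam i • b i)
    · rintro ⟨μ, hμ, rfl⟩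
      refine ⟨fun i => if h : i ∈ T then μ ⟨i, h⟩ else 0,
        fun i => by
          by_cases h : i ∈ T
          · simpa [h] using hμ ⟨i, h⟩
          · simp [h], fun i hi => by simp [hi], ?_⟩
      show _ = ∑ i : T, μ i • b i
      rw [← Finset.sum_subset (Finset.subset_univ T) (fun i _ hi => by simp [hi])]
      rw [← Finset.sum_attach T (fun i => (if h : i ∈ T then μ ⟨i, h⟩ else 0) • b i)]
      exact Finset.sum_congr rfl fun i _ => by simp [i.2]
  rw [himg]
  refine hemb.isClosedMap _ ?_
  have : {μ : T → ℝ | ∀ i, 0 ≤ μ i} = ⋂ i, {μ : T → ℝ | 0 ≤ μ i} := by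
    ext μ; simp [Set.mem_iInter]
  rw [this]
  exact isClosed_iInter fun i => isClosed_le continuous_const (continuous_apply i)

lemma farkas_cone {ι : Type*} [Fintype ι] [DecidableEq ι] (b : ι → E) (x : E)
    (h : ¬ ∃ lam : ι → ℝ, (∀ i, 0 ≤ lam i) ∧ ∑ i, lam i • b i = x) :
    ∃ y : E, (∀ i, 0 ≤ ⟪b i, y⟫_ℝ) ∧ ⟪y, x⟫_ℝ < 0 := by
  let K : ProperCone ℝ E :=
    { carrier := {z | ∃ lam : ι → ℝ, (∀ i, 0 ≤ lam i) ∧ ∑ i, lam i • b i = z}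
      zero_mem' := ⟨fun _ => 0, fun _ => le_refl 0, by simp⟩
      smul_mem' := by
        rintro ⟨c, hc⟩ z ⟨lam, h1, rfl⟩
        exact ⟨fun i => c * lam i, fun i => mul_nonneg hc (h1 i),
          by simp [Finset.smul_sum, mul_smul, Nonneg.mk_smul]⟩
      add_mem' := by
        rintro z w ⟨lam, h1, rfl⟩ ⟨lam', h1', rfl⟩
        exact ⟨fun i => lam i + lam' i, fun i => add_nonneg (h1 i) (h1' i),
          by simp [add_smul, Finset.sum_add_distrib]⟩
      isClosed' := cone_fg_closed b }
  obtain ⟨y, hy1, hy2⟩ := K.hyperplane_separation' h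
  refine ⟨y, fun i => hy1 (b i) ⟨fun j => if j = i then 1 else 0,
    fun j => by positivity, by simp [ite_smul]⟩, by rw [real_inner_comm]; exact hy2⟩

lemma affine_farkas {κ ι : Type*} [Fintype κ] [Fintype ι] [DecidableEq κ] [DecidableEq ι]
    (u : ι → κ → ℝ) (d : ι → ℝ)
    (h : ¬ ∃ y : κ → ℝ, ∀ i, d i ≤ ∑ k, u i k * y k) :
    ∃ lam : ι → ℝ, (∀ i, 0 ≤ lam i) ∧ (∀ k, ∑ i, lam i * u i k = 0) ∧
      0 < ∑ i, lam i * d i := by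
  classical
  set E' := EuclideanSpace ℝ (Option κ) with hE'
  let B : Option ι → E' := fun oi => (WithLp.equiv 2 _).symm fun ok =>
    Option.elim oi (Option.elim ok (-1) (fun _ => 0))
      (fun i => Option.elim ok (d i) (fun k => u i k))
  let x : E' := (WithLp.equiv 2 _).symm fun ok => Option.elim ok 1 (fun _ => 0)
  by_cases hx : ∃ lam : Option ι → ℝ, (∀ i, 0 ≤ lam i) ∧ ∑ i, lam i • B i = x
  · obtain ⟨lam, hnn, hsum⟩ := hx
    have hsum' := congrArg (WithLp.linearEquiv 2 ℝ (Option κ → ℝ)) hsum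
    simp only [map_sum, map_smul, WithLp.linearEquiv_apply] at hsum'
    have hcomp : ∀ ok, ∑ oi, lam oi • (WithLp.equiv 2 (Option κ → ℝ)) (B oi) ok
        = (WithLp.equiv 2 (Option κ → ℝ)) x ok := by
      intro ok
      have h1 := congrFun hsum' ok
      rw [Finset.sum_apply] at h1
      exact h1
    have hBval : ∀ oi ok, (WithLp.equiv 2 (Option κ → ℝ)) (B oi) ok =
        Option.elim oi (Option.elim ok (-1) (fun _ => 0))
          (fun i => Option.elim ok (d i) (fun k => u i k)) := by
      intro oi ok
      simp only [B, Equiv.apply_symm_apply]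
    have hxval : ∀ ok, (WithLp.equiv 2 (Option κ → ℝ)) x ok =
        Option.elim ok 1 (fun _ => 0) := by
      intro ok
      simp only [x, Equiv.apply_symm_apply]
    refine ⟨fun i => lam (some i), fun i => hnn _, ?_, ?_⟩
    · intro k
      have hk := hcomp (some k)
      rw [hxval, Fintype.sum_option] at hk
      simp only [hBval, Option.elim_some, Option.elim_none, smul_eq_mul, mul_zero,
        zero_add] at hk
      simpa using hk
    · have hk := hcomp none
      rw [hxval, Fintype.sum_option] at hk
      simp only [hBval, Option.elim_some, Option.elim_none, smul_eq_mul] at hk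
      have := hnn none
      have h2 : ∑ i : ι, lam (some i) * d i = 1 + lam none := by linarith
      simp only [h2]
      linarith
  · obtain ⟨y, hy1, hy2⟩ := farkas_cone B x hx
    exfalso
    apply h
    have hyx : ⟪y, x⟫_ℝ = y none := by
      rw [PiLp.inner_apply]
      simp only [RCLike.inner_apply, conj_trivial, x, WithLp.equiv_symm_apply, PiLp.toLp_apply]
      rw [Fintype.sum_option]
      simp
    have hynone : y none < 0 := by rw [← hyx]; exact hy2
    set c : ℝ := -(y none) with hc
    have hcpos : 0 < c := by simp [hc]; linarith
    refine ⟨fun k => y (some k) / c, ?_⟩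
    intro i
    have hi := hy1 (some i)
    rw [PiLp.inner_apply] at hi
    simp only [RCLike.inner_apply, conj_trivial] at hi
    rw [Fintype.sum_option] at hi
    simp only [B, WithLp.equiv_symm_apply, PiLp.toLp_apply, Option.elim_some, Option.elim_none] at hi
    -- hi : 0 ≤ d i * y none + ∑ k, u i k * y (some k)
    have hsum : c * d i ≤ ∑ k : κ, u i k * y (some k) := by
      have hcd : c * d i = -(d i * y none) := by rw [hc]; ring
      have hsw : ∑ k, y (some k) * u i k = ∑ k, u i k * y (some k) :=
        Finset.sum_congr rfl fun k _ => mul_comm _ _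
      linarith
    have hdiv : ∑ k : κ, u i k * (y (some k) / c) = (∑ k : κ, u i k * y (some k)) / c := by
      rw [Finset.sum_div]
      exact Finset.sum_congr rfl fun k _ => by ring
    rw [hdiv, le_div_iff₀ hcpos]
    linarith

lemma lp_duality {n d : Type*} [Fintype n] [Fintype d] [DecidableEq n] [DecidableEq d]
    (A : d → n → ℝ) (b : d → ℝ) (c : n → ℝ) (V : ℝ)
    (hatt : ∃ x : n → ℝ, (∀ k, 0 ≤ x k) ∧ (∀ j, ∑ k, A j k * x k = b j) ∧ ∑ k, c k * x k = V)
    (hbnd : ∀ x : n → ℝ, (∀ k, 0 ≤ x k) → (∀ j, ∑ k, A j k * x k = b j) →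
      ∑ k, c k * x k ≤ V) :
    ∃ y : d → ℝ, (∀ k, c k ≤ ∑ j, y j * A j k) ∧ ∑ j, y j * b j ≤ V := by
  by_contra hcon
  -- infeasibility of the dual system as one inequality system over y : d → ℝ
  have hinf : ¬ ∃ y : d → ℝ, ∀ i : Option n,
      (Option.elim i (-V) c : ℝ) ≤ ∑ j, (Option.elim i (fun j => -(b j)) (fun k j => A j k)) j * y j := by
    rintro ⟨y, hy⟩
    apply hcon
    refine ⟨y, fun k => ?_, ?_⟩
    · have := hy (some k)
      simpa [mul_comm] using this
    · have := hy none
      simp only [Option.elim_none] at this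
      have h2 : ∑ j, -(b j) * y j = -∑ j, y j * b j := by
        rw [← Finset.sum_neg_distrib]
        exact Finset.sum_congr rfl fun j _ => by ring
      rw [h2] at this
      linarith
  obtain ⟨lam, hnn, hzero, hpos⟩ := affine_farkas
    (fun i : Option n => (Option.elim i (fun j => -(b j)) (fun k j => A j k))) 
    (fun i : Option n => Option.elim i (-V) c) hinf
  obtain ⟨x, hx0, hxA, hxc⟩ := hatt
  set μ : ℝ := lam none with hμ
  set w : n → ℝ := fun k => lam (some k) with hw
  have hAw : ∀ j, ∑ k, A j k * w k = μ * b j := by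
    intro j
    have := hzero j
    rw [Fintype.sum_option] at this
    simp only [Option.elim_none, Option.elim_some] at this
    have h2 : ∑ k, lam (some k) * A j k = ∑ k, A j k * w k := by
      exact Finset.sum_congr rfl fun k _ => by rw [hw]; ring
    rw [h2] at this
    linarith
  have hcw : μ * V < ∑ k, c k * w k := by
    have := hpos
    rw [Fintype.sum_option] at this
    simp only [Option.elim_none, Option.elim_some] at this
    have h2 : ∑ k, lam (some k) * c k = ∑ k, c k * w k := by
      exact Finset.sum_congr rfl fun k _ => by rw [hw]; ring
    rw [h2] at this
    linarith
  rcases eq_or_lt_of_le (hnn none) with hμ0 | hμpos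
  · -- μ = 0 : add direction w to x*
    have hfeas : ∀ j, ∑ k, A j k * (x k + w k) = b j := by
      intro j
      rw [show ∑ k, A j k * (x k + w k) = ∑ k, A j k * x k + ∑ k, A j k * w k by
        rw [← Finset.sum_add_distrib]; exact Finset.sum_congr rfl fun k _ => by ring]
      rw [hxA j, hAw j, hμ, ← hμ0, zero_mul, add_zero]
    have hle := hbnd (fun k => x k + w k) (fun k => add_nonneg (hx0 k) (hnn (some k))) hfeas
    rw [show ∑ k, c k * (x k + w k) = ∑ k, c k * x k + ∑ k, c k * w k by
      rw [← Finset.sum_add_distrib]; exact Finset.sum_congr rfl fun k _ => by ring] at hle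
    rw [hxc] at hle
    have hμV : μ * V = 0 := by rw [hμ, ← hμ0]; ring
    linarith
  · -- μ > 0 : scale w
    have hfeas : ∀ j, ∑ k, A j k * (w k / μ) = b j := by
      intro j
      rw [show ∑ k, A j k * (w k / μ) = (∑ k, A j k * w k) / μ by
        rw [Finset.sum_div]; exact Finset.sum_congr rfl fun k _ => by ring]
      rw [hAw j, mul_div_cancel_left₀ _ hμpos.ne']
    have hb := hbnd (fun k => w k / μ) (fun k => div_nonneg (hnn (some k)) hμpos.le) hfeas
    rw [show ∑ k, c k * (w k / μ) = (∑ k, c k * w k) / μ by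
      rw [Finset.sum_div]; exact Finset.sum_congr rfl fun k _ => by ring] at hb
    rw [div_le_iff₀ hμpos] at hb
    nlinarith


end LPAux

/-- the worst-case λ-regret of `Φ` over a moment–quantile uncertainty set
equals the (attained) infimum of `θ` over dual-feasible tuples `(θ, α, β)`. -/
theorem stmt5 (K : ℕ) (v : Fin (K + 1) → ℝ) (hv : StrictMono v) (hv0 : ∀ i, 0 ≤ v i)
    (I : Finset ℕ) (m : ℕ → ℝ) (J : Finset ℕ) (r q : ℕ → ℝ)
    (hI0 : 0 ∈ I) (hm0 : m 0 = 1) (hrG : ∀ j ∈ J, ∃ i, r j = v i)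
    (hMQ : (MQSet v I m J r q).Nonempty)
    (φ : Fin (K + 1) → ℝ) (hφ : IsDist φ) (l : ℝ) (hl : l ∈ Set.Icc (0 : ℝ) 1) :
    IsLeast {θ : ℝ | ∃ α β : ℕ → Fin (K + 1) → ℝ, dualFeas v I m J r q φ l θ α β}
      (wcReg v (MQSet v I m J r q) φ l) := by
  classical
  obtain ⟨hl0, hl1⟩ := hl
  set MQ := MQSet v I m J r q with hMQdef
  set c : Fin (K+1) → Fin (K+1) → ℝ :=
    fun p k => l * v p * (if v p ≤ v k then 1 else 0) - cum v φ k with hcdef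
  -- basic identities
  have rev_eq : ∀ f : Fin (K+1) → ℝ, revenue v φ f = ∑ k, f k * cum v φ k := by
    intro f
    unfold revenue tail cum
    simp_rw [Finset.mul_sum]
    rw [Finset.sum_comm]
    refine Finset.sum_congr rfl fun k _ => ?_
    refine Finset.sum_congr rfl fun s _ => ?_
    split_ifs <;> ring
  have obj_eq : ∀ (p : Fin (K+1)) (f : Fin (K+1) → ℝ),
      ∑ k, c p k * f k = l * (v p * tail v f (v p)) - revenue v φ f := by
    intro p f
    rw [rev_eq]
    unfold tail
    simp only [hcdef, sub_mul, Finset.sum_sub_distrib]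
    congr 1
    · simp only [Finset.mul_sum]
      refine Finset.sum_congr rfl fun k _ => ?_
      split_ifs <;> ring
    · exact Finset.sum_congr rfl fun k _ => by ring
  have le_opt : ∀ (f : Fin (K+1) → ℝ) (p : Fin (K+1)),
      v p * tail v f (v p) ≤ opt v f := by
    intro f p
    exact le_ciSup (Set.finite_range fun i => v i * tail v f (v i)).bddAbove p
  have obj_le : ∀ (p : Fin (K+1)) (f : Fin (K+1) → ℝ),
      ∑ k, c p k * f k ≤ l * opt v f - revenue v φ f := by
    intro p f
    rw [obj_eq]
    have := mul_le_mul_of_nonneg_left (le_opt f p) hl0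
    linarith
  have exists_opt : ∀ f : Fin (K+1) → ℝ,
      ∃ p, l * opt v f - revenue v φ f = ∑ k, c p k * f k := by
    intro f
    obtain ⟨p, hp⟩ := Finite.exists_max (fun i => v i * tail v f (v i))
    refine ⟨p, ?_⟩
    rw [obj_eq]
    have : opt v f = v p * tail v f (v p) :=
      le_antisymm (ciSup_le hp) (le_opt f p)
    rw [this]
  -- compactness of MQ
  have hclosed : IsClosed MQ := by
    have h1 : IsClosed {f : Fin (K+1) → ℝ | ∀ i, 0 ≤ f i} := by
      rw [Set.setOf_forall]
      exact isClosed_iInter fun i => isClosed_le continuous_const (continuous_apply i)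
    have h2 : IsClosed {f : Fin (K+1) → ℝ | ∑ i, f i = 1} :=
      isClosed_eq (continuous_finset_sum _ fun k _ => continuous_apply k) continuous_const
    have h3 : IsClosed {f : Fin (K+1) → ℝ | ∀ i ∈ I, ∑ k, f k * v k ^ i = m i} := by
      rw [Set.setOf_forall]
      refine isClosed_iInter fun i => ?_
      rw [Set.setOf_forall]
      refine isClosed_iInter fun hi => ?_
      exact isClosed_eq (continuous_finset_sum _ fun k _ =>
        (continuous_apply k).mul continuous_const) continuous_const
    have h4 : IsClosed {f : Fin (K+1) → ℝ | ∀ j ∈ J, tail v f (r j) = q j} := by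
      rw [Set.setOf_forall]
      refine isClosed_iInter fun j => ?_
      rw [Set.setOf_forall]
      refine isClosed_iInter fun hj => ?_
      refine isClosed_eq (continuous_finset_sum _ fun k _ => ?_) continuous_const
      by_cases h : r j ≤ v k
      · simpa only [if_pos h] using continuous_apply k
      · simp only [if_neg h]
        exact continuous_const
    have : MQ = ({f : Fin (K+1) → ℝ | ∀ i, 0 ≤ f i} ∩ {f | ∑ i, f i = 1}) ∩
        ({f | ∀ i ∈ I, ∑ k, f k * v k ^ i = m i} ∩ {f | ∀ j ∈ J, tail v f (r j) = q j}) := by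
      ext f
      simp only [hMQdef, MQSet, IsDist, Set.mem_setOf_eq, Set.mem_inter_iff]
      try tauto
    rw [this]
    exact ((h1.inter h2).inter (h3.inter h4))
  have hbddMQ : Bornology.IsBounded MQ := by
    apply (Metric.isBounded_closedBall (x := (0 : Fin (K+1) → ℝ)) (r := 1)).subset
    intro f hf
    rw [Metric.mem_closedBall, dist_zero_right]
    refine (pi_norm_le_iff_of_nonneg zero_le_one).mpr fun k => ?_
    rw [Real.norm_eq_abs, abs_le]
    have h1 := hf.1.1 k
    have hsum := hf.1.2
    have h2 : f k ≤ ∑ i, f i := Finset.single_le_sum (fun i _ => hf.1.1 i) (Finset.mem_univ k)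
    constructor <;> linarith
  have hcompact : IsCompact MQ := Metric.isCompact_of_isClosed_isBounded hclosed hbddMQ
  -- per-price primal maximizers
  have hmaxex : ∀ p : Fin (K+1), ∃ fp ∈ MQ, ∀ f ∈ MQ, ∑ k, c p k * f k ≤ ∑ k, c p k * fp k := by
    intro p
    have hcont : Continuous fun f : Fin (K+1) → ℝ => ∑ k, c p k * f k :=
      continuous_finset_sum _ fun k _ => continuous_const.mul (continuous_apply k)
    obtain ⟨fp, hfp, hmax⟩ := hcompact.exists_isMaxOn hMQ hcont.continuousOn
    exact ⟨fp, hfp, fun f hf => hmax hf⟩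
  choose fp hfpMQ hfpmax using hmaxex
  set V : Fin (K+1) → ℝ := fun p => ∑ k, c p k * fp p k with hVdef
  set S := ((fun f => l * opt v f - revenue v φ f) '' MQ) with hSdef
  have hSbdd : BddAbove S := by
    refine ⟨⨆ p, V p, ?_⟩
    rintro x ⟨f, hf, rfl⟩
    obtain ⟨p, hp⟩ := exists_opt f
    simp only
    rw [hp]
    exact (hfpmax p f hf).trans (le_ciSup (Set.finite_range V).bddAbove p)
  have hSne : S.Nonempty := hMQ.image _
  have hVle : ∀ p, V p ≤ wcReg v MQ φ l := by
    intro p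
    exact (obj_le p (fp p)).trans (le_csSup hSbdd ⟨fp p, hfpMQ p, rfl⟩)
  constructor
  · -- membership: construct the dual variables via LP duality, one price at a time
    have hdual : ∀ p : Fin (K+1), ∃ y : (↥I ⊕ ↥J) → ℝ,
        (∀ k, c p k ≤ ∑ j, y j * (Sum.elim (fun i : ↥I => v k ^ (i : ℕ))
          (fun j : ↥J => if r j ≤ v k then (1:ℝ) else 0) j)) ∧
        ∑ j, y j * (Sum.elim (fun i : ↥I => m i) (fun j : ↥J => q j) j) ≤ V p := by
      intro p
      apply lp_duality
      · refine ⟨fp p, (hfpMQ p).1.1, ?_, rfl⟩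
        rintro (i | j)
        · simp only [Sum.elim_inl]
          rw [← (hfpMQ p).2.1 i i.2]
          exact Finset.sum_congr rfl fun k _ => by ring
        · simp only [Sum.elim_inr]
          rw [← (hfpMQ p).2.2 j j.2]
          unfold tail
          exact Finset.sum_congr rfl fun k _ => by split_ifs <;> ring
      · intro x hx0 hxA
        apply hfpmax p x
        refine ⟨⟨hx0, ?_⟩, fun i hi => ?_, fun j hj => ?_⟩
        · have := hxA (Sum.inl ⟨0, hI0⟩)
          simp only [Sum.elim_inl, pow_zero, one_mul] at this
          rw [this, hm0]
        · have := hxA (Sum.inl ⟨i, hi⟩)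
          simp only [Sum.elim_inl] at this
          rw [← this]
          exact Finset.sum_congr rfl fun k _ => by ring
        · have := hxA (Sum.inr ⟨j, hj⟩)
          simp only [Sum.elim_inr] at this
          rw [← this]
          unfold tail
          exact Finset.sum_congr rfl fun k _ => by split_ifs <;> ring
    choose y hyfeas hyobj using hdual
    refine ⟨fun i p => if h : i ∈ I then y p (Sum.inl ⟨i, h⟩) else 0,
            fun j p => if h : j ∈ J then y p (Sum.inr ⟨j, h⟩) else 0, ?_, ?_⟩
    · intro p
      have hsplit : ∑ i ∈ I, (if h : i ∈ I then y p (Sum.inl ⟨i, h⟩) else 0) * m i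
          + ∑ j ∈ J, (if h : j ∈ J then y p (Sum.inr ⟨j, h⟩) else 0) * q j
          = ∑ j, y p j * (Sum.elim (fun i : ↥I => m i) (fun j : ↥J => q j) j) := by
        rw [Fintype.sum_sum_type]
        congr 1
        · rw [← Finset.sum_attach I (fun i => (if h : i ∈ I then y p (Sum.inl ⟨i, h⟩) else 0) * m i)]
          exact Finset.sum_congr rfl fun i _ => by simp [i.2]
        · rw [← Finset.sum_attach J (fun j => (if h : j ∈ J then y p (Sum.inr ⟨j, h⟩) else 0) * q j)]
          exact Finset.sum_congr rfl fun j _ => by simp [j.2]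
      rw [hsplit]
      exact (hyobj p).trans (hVle p)
    · intro w p
      have hfw := hyfeas p w
      rw [Fintype.sum_sum_type] at hfw
      have hIs : ∑ i ∈ I, (if h : i ∈ I then y p (Sum.inl ⟨i, h⟩) else 0) * v w ^ i
          = ∑ i : ↥I, y p (Sum.inl i) * (Sum.elim (fun i : ↥I => v w ^ (i : ℕ))
            (fun j : ↥J => if r j ≤ v w then (1:ℝ) else 0) (Sum.inl i)) := by
        rw [← Finset.sum_attach I (fun i => (if h : i ∈ I then y p (Sum.inl ⟨i, h⟩) else 0) * v w ^ i)]
        exact Finset.sum_congr rfl fun i _ => by simp [i.2]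
      have hJs : ∑ j ∈ J, (if h : j ∈ J then y p (Sum.inr ⟨j, h⟩) else 0) * (if r j ≤ v w then (1:ℝ) else 0)
          = ∑ j : ↥J, y p (Sum.inr j) * (Sum.elim (fun i : ↥I => v w ^ (i : ℕ))
            (fun j : ↥J => if r j ≤ v w then (1:ℝ) else 0) (Sum.inr j)) := by
        rw [← Finset.sum_attach J (fun j => (if h : j ∈ J then y p (Sum.inr ⟨j, h⟩) else 0) * (if r j ≤ v w then (1:ℝ) else 0))]
        exact Finset.sum_congr rfl fun j _ => by simp [j.2]
      rw [hIs, hJs]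
      simp only [hcdef] at hfw
      linarith
  · -- lower bound: weak duality
    rintro θ ⟨α, β, hfa, hfb⟩
    apply csSup_le hSne
    rintro x ⟨f, hf, rfl⟩
    obtain ⟨p, hp⟩ := exists_opt f
    simp only
    rw [hp]
    have step1 : ∑ k, c p k * f k ≤
        ∑ k, f k * (∑ i ∈ I, α i p * v k ^ i + ∑ j ∈ J, β j p * (if r j ≤ v k then 1 else 0)) := by
      refine Finset.sum_le_sum fun k _ => ?_
      have hb := hfb k p
      have hfk := hf.1.1 k
      have : c p k ≤ ∑ i ∈ I, α i p * v k ^ i + ∑ j ∈ J, β j p * (if r j ≤ v k then 1 else 0) := by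
        simp only [hcdef]; linarith
      calc c p k * f k = f k * c p k := by ring
      _ ≤ f k * (∑ i ∈ I, α i p * v k ^ i + ∑ j ∈ J, β j p * (if r j ≤ v k then 1 else 0)) :=
          mul_le_mul_of_nonneg_left this hfk
    have step2 : ∑ k, f k * (∑ i ∈ I, α i p * v k ^ i + ∑ j ∈ J, β j p * (if r j ≤ v k then 1 else 0))
        = ∑ i ∈ I, α i p * m i + ∑ j ∈ J, β j p * q j := by
      simp_rw [mul_add, Finset.sum_add_distrib]
      congr 1
      · simp_rw [Finset.mul_sum]
        rw [Finset.sum_comm]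
        refine Finset.sum_congr rfl fun i hi => ?_
        rw [← hf.2.1 i hi, Finset.mul_sum]
        exact Finset.sum_congr rfl fun k _ => by ring
      · simp_rw [Finset.mul_sum]
        rw [Finset.sum_comm]
        refine Finset.sum_congr rfl fun j hj => ?_
        rw [← hf.2.2 j hj]
        unfold tail
        rw [Finset.mul_sum]
        exact Finset.sum_congr rfl fun k _ => by split_ifs <;> ring
    calc ∑ k, c p k * f k ≤ _ := step1
    _ = _ := step2
    _ ≤ θ := hfa p
end RobustPricing
end
end
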